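/- Let (a_m)_{m≥1} be a real sequence with ∑_{m=1}^∞ a_m converging absolutely to S, and let N be an ℕ-valued random variable with P(N ≥ m) > 0 for all m ≥ 1 and E[∑_{m=1}^N |a_m|/P(N ≥ m)] < ∞. Then E[∑_{m=1}^N a_m / P(N ≥ m)] = S. -/

import Mathlib

open MeasureTheory

/-- Russian roulette estimator: truncating an absolutely convergent series at a random
cutoff `N` and reweighting the `m`-th term by `1 / P(N ≥ m)` is unbiased. -/
theorem stmt_4 {Ω : Type*} [MeasurableSpace Ω] (μ : Measure Ω) [IsProbabilityMeasure μ]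
    (a : ℕ → ℝ) (S : ℝ)
    (habs : Summable fun m : ℕ => |a (m + 1)|)
    (hsum : HasSum (fun m : ℕ => a (m + 1)) S)
    (N : Ω → ℕ) (hN : Measurable N)
    (hpos : ∀ m : ℕ, 1 ≤ m → 0 < μ {ω | m ≤ N ω})
    (hint : Integrable
      (fun ω => ∑ m ∈ Finset.Icc 1 (N ω), |a m| / (μ {ω' | m ≤ N ω'}).toReal) μ) :
    ∫ ω, (∑ m ∈ Finset.Icc 1 (N ω), a m / (μ {ω' | m ≤ N ω'}).toReal) ∂μ = S := by
  set p : ℕ → ℝ := fun m => (μ {ω' | m ≤ N ω'}).toReal with hp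
  have hA : ∀ m : ℕ, MeasurableSet {ω | m ≤ N ω} := fun m => hN measurableSet_Ici
  have hppos : ∀ m : ℕ, 1 ≤ m → 0 < p m := fun m hm =>
    ENNReal.toReal_pos (hpos m hm).ne' (measure_ne_top μ _)
  set f : ℕ → Ω → ℝ :=
    fun m ω => Set.indicator {ω' | m + 1 ≤ N ω'} (fun _ => a (m + 1) / p (m + 1)) ω with hf
  have hfint : ∀ m, Integrable (f m) μ := fun m =>
    (integrable_const _).indicator (hA (m + 1))
  have hfeq : ∀ m, ∫ ω, f m ω ∂μ = a (m + 1) := by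
    intro m
    rw [hf]
    rw [integral_indicator_const _ (hA (m + 1))]
    simp only [smul_eq_mul]
    rw [Measure.real, mul_div_cancel₀]
    exact (hppos (m + 1) (by omega)).ne'
  have hnorm : ∀ m, ∫ ω, ‖f m ω‖ ∂μ = |a (m + 1)| := by
    intro m
    have : ∀ ω, ‖f m ω‖ = Set.indicator {ω' | m + 1 ≤ N ω'}
        (fun _ => ‖a (m + 1) / p (m + 1)‖) ω := fun ω =>
      norm_indicator_eq_indicator_norm _ ω
    simp_rw [this]
    rw [integral_indicator_const _ (hA (m + 1))]
    have hpp := hppos (m + 1) (by omega)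
    rw [smul_eq_mul, Real.norm_eq_abs, abs_div, abs_of_pos hpp, Measure.real, mul_div_cancel₀ _ hpp.ne']
  have hsummable : Summable fun m => ∫ ω, ‖f m ω‖ ∂μ := by
    simpa only [hnorm] using habs
  have hpt : ∀ ω, (∑ m ∈ Finset.Icc 1 (N ω), a m / p m) = ∑' m, f m ω := by
    intro ω
    rw [tsum_eq_sum (s := Finset.range (N ω)) (by
      intro m hm
      simp only [Finset.mem_range, not_lt] at hm
      simp only [hf]
      rw [Set.indicator_of_notMem]
      simp only [Set.mem_setOf_eq, not_le]
      omega)]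
    rw [← Finset.Ico_add_one_right_eq_Icc, Finset.sum_Ico_eq_sum_range]
    apply Finset.sum_congr rfl
    intro m hm
    simp only [Finset.mem_range] at hm
    simp only [hf]
    rw [Set.indicator_of_mem (by simp only [Set.mem_setOf_eq]; omega)]
    ring_nf
  calc ∫ ω, (∑ m ∈ Finset.Icc 1 (N ω), a m / p m) ∂μ
      = ∫ ω, (∑' m, f m ω) ∂μ := by simp_rw [hpt]
    _ = ∑' m, ∫ ω, f m ω ∂μ :=
        (integral_tsum_of_summable_integral_norm hfint hsummable).symm
    _ = S := by simp_rw [hfeq]; exact hsum.tsum_eq
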